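/- For the cubic threefold X ⊂ P^4 defined by F = x_0 x_1 x_2 + x_0^2 x_4 + x_1^2 x_3, the Gauss map has one-dimensional general fibers; more precisely, on the affine chart x_0 = 1, the Gauss map sends (x_1, x_2, x_3) to (x_1x_2 + 2x_1^2x_3, −x_2 − 2x_1x_3, −x_1, −x_1^2) ∈ A^4, and its image is 2-dimensional, so the dual defect of X equals 1. -/

import Mathlib

open MvPolynomial

noncomputable section

variable {σ : Type*}

/-- The common zero locus of a set of polynomials. -/
def zLocus (I : Set (MvPolynomial σ ℂ)) : Set (σ → ℂ) :=
  {x | ∀ f ∈ I, eval x f = 0}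

/-- A set is algebraic if it is a common zero locus of polynomials. -/
def IsAlg (S : Set (σ → ℂ)) : Prop :=
  ∃ I : Set (MvPolynomial σ ℂ), S = zLocus I

/-- Zariski closure. -/
def zcl (S : Set (σ → ℂ)) : Set (σ → ℂ) :=
  ⋂₀ {T | IsAlg T ∧ S ⊆ T}

/-- Irreducibility of a set with respect to algebraic subsets. -/
def IsIrredV (S : Set (σ → ℂ)) : Prop :=
  S.Nonempty ∧ ∀ T₁ T₂ : Set (σ → ℂ), IsAlg T₁ → IsAlg T₂ →
    S ⊆ T₁ ∪ T₂ → S ⊆ T₁ ∨ S ⊆ T₂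

/-- Dimension of (the affine cone over) a variety, via chains of irreducible
algebraic subsets. For the cone over a projective variety this is
(projective dimension) + 1. -/
def adim (S : Set (σ → ℂ)) : WithBot (WithTop ℕ) :=
  Order.krullDim {T : Set (σ → ℂ) // IsAlg T ∧ IsIrredV T ∧ T ⊆ S}

/-- `S` is (the affine cone over) a projective cone: there is a vertex `v`
such that the line through `v` and any point of `S` stays in `S`. -/
def IsConeV (S : Set (σ → ℂ)) : Prop :=
  ∃ v ∈ S, v ≠ 0 ∧ ∀ x ∈ S, ∀ a b : ℂ, a • v + b • x ∈ S

/-- Secant variety (of cones): closure of the union of lines through pairs of points. -/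
def secantV (S : Set (σ → ℂ)) : Set (σ → ℂ) :=
  zcl {v | ∃ x ∈ S, ∃ y ∈ S, ∃ a b : ℂ, v = a • x + b • y}

/-- The gradient of a polynomial at a point. -/
def gradP [Fintype σ] [DecidableEq σ] (P : MvPolynomial σ ℂ) (v : σ → ℂ) : σ → ℂ :=
  fun i => eval v (pderiv i P)

/-- The singular locus (cone) of the hypersurface defined by `P`. -/
def singLocus [Fintype σ] [DecidableEq σ] (P : MvPolynomial σ ℂ) : Set (σ → ℂ) :=
  {v | ∀ i, eval v (pderiv i P) = 0}

end

/-- The Perazzo cubic threefold `x₀x₁x₂ + x₀²x₄ + x₁²x₃` in `ℙ⁴`. -/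
noncomputable def perazzoCubic : MvPolynomial (Fin 5) ℂ :=
  MvPolynomial.X 0 * MvPolynomial.X 1 * MvPolynomial.X 2
    + MvPolynomial.X 0 ^ 2 * MvPolynomial.X 4 + MvPolynomial.X 1 ^ 2 * MvPolynomial.X 3

/-!
Both sets are images of polynomial maps with fewer parameters. In the coordinates
`a = -x₂ - 2x₁x₃`, `b = -x₁` the chart Gauss map is `(a, b) ↦ (ab, a, b, -b²)`. On `X`, Euler's
relation `x₀∂₀F + x₁∂₁F = 2F = 0` forces `(∂₀F, ∂₁F) = t (x₁, -x₀)`, so the Gauss image of the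
cone is the image of `(x₀, x₁, t) ↦ (x₁t, -x₀t, x₀x₁, x₁², x₀²)`.

The closure of the image of a polynomial map `ℂⁿ → ℂᴺ` has dimension at most `n`: its
coordinate ring embeds into `ℂ[x₁, …, xₙ]`, so by Noether normalization it is integral over a
polynomial ring in `s` variables, where `s ≤ n` by comparing transcendence degrees, and integral
extensions do not lengthen chains of primes. The lower bounds come from explicit chains of images of smaller
parameter spaces, separated by a coordinate function.
-/

open Set

theorem ringKrullDim_le_of_isIntegral (R S : Type*) [CommRing R] [CommRing S] [Algebra R S]
    [Algebra.IsIntegral R S] : ringKrullDim S ≤ ringKrullDim R :=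
  Order.krullDim_le_of_strictMono (fun P : PrimeSpectrum S => P.comap (algebraMap R S))
    fun _ _ h => Ideal.IsIntegral.comap_lt_comap h

theorem le_of_injective_algHom_mvPolynomial {k : Type*} [Field k] {s n : ℕ}
    (f : MvPolynomial (Fin s) k →ₐ[k] MvPolynomial (Fin n) k) (hf : Function.Injective f) :
    s ≤ n := by
  simpa using lift_trdeg_le_of_injective f hf

theorem ringKrullDim_le_of_injective_mvPolynomial {k A : Type*} [Field k] [CommRing A]
    [Algebra k A] [Algebra.FiniteType k A] {n : ℕ}
    (φ : A →ₐ[k] MvPolynomial (Fin n) k) (hφ : Function.Injective φ) :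
    ringKrullDim A ≤ n := by
  nontriviality A
  obtain ⟨s, g, hg, hgi⟩ := exists_integral_inj_algHom_of_fg k A
  let := g.toRingHom.toAlgebra
  have : Algebra.IsIntegral (MvPolynomial (Fin s) k) A := ⟨hgi⟩
  calc ringKrullDim A ≤ ringKrullDim (MvPolynomial (Fin s) k) := ringKrullDim_le_of_isIntegral _ _
    _ = s := by simp [ringKrullDim_eq_zero_of_field]
    _ ≤ n := by exact_mod_cast le_of_injective_algHom_mvPolynomial (φ.comp g) (hφ.comp hg)

theorem ringKrullDim_quotient_ker_aeval_le {k σ : Type*} [Field k] [Finite σ] {n : ℕ}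
    (p : σ → MvPolynomial (Fin n) k) :
    ringKrullDim (MvPolynomial σ k ⧸ RingHom.ker (aeval (R := k) p)) ≤ n :=
  ringKrullDim_le_of_injective_mvPolynomial (Ideal.kerLiftAlg (aeval (R := k) p))
    (Ideal.kerLiftAlg_injective _)

section Zariski

variable {σ : Type*}

theorem mem_zLocus_singleton {f : MvPolynomial σ ℂ} {x : σ → ℂ} :
    x ∈ zLocus {f} ↔ eval x f = 0 := by
  simp [zLocus]

theorem subset_zcl (S : Set (σ → ℂ)) : S ⊆ zcl S :=
  fun _ hx => mem_sInter.2 fun _ hT => hT.2 hx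

theorem zcl_subset {S T : Set (σ → ℂ)} (hT : IsAlg T) (h : S ⊆ T) : zcl S ⊆ T :=
  sInter_subset_of_mem ⟨hT, h⟩

theorem zcl_eq_zLocus_vanishingIdeal (S : Set (σ → ℂ)) :
    zcl S = zLocus (vanishingIdeal ℂ S : Set (MvPolynomial σ ℂ)) := by
  refine (zcl_subset ⟨_, rfl⟩ fun x hx f hf => mem_vanishingIdeal_iff.1 hf x hx).antisymm
    fun x hx => mem_sInter.2 ?_
  rintro T ⟨⟨I, rfl⟩, hST⟩ f hf
  exact hx f fun y hy => hST hy f hf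

theorem isAlg_zcl (S : Set (σ → ℂ)) : IsAlg (zcl S) :=
  ⟨_, zcl_eq_zLocus_vanishingIdeal S⟩

theorem IsAlg.zcl_eq {T : Set (σ → ℂ)} (hT : IsAlg T) : zcl T = T :=
  (zcl_subset hT subset_rfl).antisymm (subset_zcl T)

theorem zcl_mono {S T : Set (σ → ℂ)} (h : S ⊆ T) : zcl S ⊆ zcl T :=
  zcl_subset (isAlg_zcl T) (h.trans (subset_zcl T))

theorem zcl_subset_zLocus_singleton {S : Set (σ → ℂ)} {f : MvPolynomial σ ℂ}
    (hf : ∀ x ∈ S, eval x f = 0) : zcl S ⊆ zLocus {f} :=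
  zcl_subset ⟨_, rfl⟩ fun x hx => mem_zLocus_singleton.2 (hf x hx)

theorem vanishingIdeal_zcl (S : Set (σ → ℂ)) : vanishingIdeal ℂ (zcl S) = vanishingIdeal ℂ S :=
  (vanishingIdeal_anti_mono (subset_zcl S)).antisymm fun _ hf _ hx =>
    mem_zLocus_singleton.1 (zcl_subset_zLocus_singleton (mem_vanishingIdeal_iff.1 hf) hx)

theorem vanishingIdeal_lt_vanishingIdeal {T T' : Set (σ → ℂ)} (hT : IsAlg T) (hT' : IsAlg T')
    (h : T < T') : vanishingIdeal ℂ T' < vanishingIdeal ℂ T := by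
  refine (vanishingIdeal_anti_mono h.le).lt_of_ne fun he => h.ne ?_
  rw [← hT.zcl_eq, ← hT'.zcl_eq, zcl_eq_zLocus_vanishingIdeal, zcl_eq_zLocus_vanishingIdeal, he]

theorem zcl_lt_zcl {S S' : Set (σ → ℂ)} (h : S ⊆ S') {f : MvPolynomial σ ℂ}
    (hf : ∀ x ∈ S, eval x f = 0) {y : σ → ℂ} (hy : y ∈ S') (hfy : eval y f ≠ 0) :
    zcl S < zcl S' :=
  (zcl_mono h).ssubset_of_not_subset fun hc =>
    hfy (mem_zLocus_singleton.1 (zcl_subset_zLocus_singleton hf (hc (subset_zcl S' hy))))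

theorem IsIrredV.zcl {S : Set (σ → ℂ)} (hS : IsIrredV S) : IsIrredV (zcl S) := by
  refine ⟨hS.1.mono (subset_zcl S), fun T₁ T₂ h₁ h₂ hsub => ?_⟩
  exact (hS.2 T₁ T₂ h₁ h₂ ((subset_zcl S).trans hsub)).imp (zcl_subset h₁) (zcl_subset h₂)

theorem IsIrredV.isPrime_vanishingIdeal {T : Set (σ → ℂ)} (hT : IsIrredV T) :
    (vanishingIdeal ℂ T).IsPrime := by
  refine Ideal.isPrime_iff.2 ⟨fun h => ?_, fun {f g} hfg => ?_⟩
  · obtain ⟨x, hx⟩ := hT.1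
    simpa using (Ideal.eq_top_iff_one _).1 h x hx
  · have hsub : T ⊆ zLocus {f} ∪ zLocus {g} := fun x hx => by
      simpa [mem_zLocus_singleton] using hfg x hx
    exact (hT.2 _ _ ⟨_, rfl⟩ ⟨_, rfl⟩ hsub).imp
      (fun h x hx => mem_zLocus_singleton.1 (h hx)) (fun h x hx => mem_zLocus_singleton.1 (h hx))

theorem adim_le_ringKrullDim_quotient {S : Set (σ → ℂ)} {I : Ideal (MvPolynomial σ ℂ)}
    (hI : I ≤ vanishingIdeal ℂ S) : adim S ≤ ringKrullDim (MvPolynomial σ ℂ ⧸ I) := by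
  rw [adim, ringKrullDim_quotient, ← Order.krullDim_orderDual (α := PrimeSpectrum.zeroLocus _)]
  refine Order.krullDim_le_of_strictMono (fun T => OrderDual.toDual
    ⟨⟨vanishingIdeal ℂ T.1, T.2.2.1.isPrime_vanishingIdeal⟩,
      (PrimeSpectrum.mem_zeroLocus _ _).2 (hI.trans (vanishingIdeal_anti_mono T.2.2.2))⟩)
    fun T T' h => vanishingIdeal_lt_vanishingIdeal T.2.1 T'.2.1 h

theorem le_adim_of_strictMono {S : Set (σ → ℂ)} {d : ℕ} (T : Fin (d + 1) → Set (σ → ℂ))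
    (hT : StrictMono T) (halg : ∀ i, IsAlg (T i)) (hirr : ∀ i, IsIrredV (T i))
    (hS : T (Fin.last d) ⊆ S) : (d : WithBot ℕ∞) ≤ adim S :=
  Order.LTSeries.length_le_krullDim <| LTSeries.mk d
    (fun i => ⟨T i, halg i, hirr i, (hT.monotone (Fin.le_last i)).trans hS⟩)
    fun _ _ h => hT h

end Zariski

section PolyMap

variable {σ ι : Type*}

noncomputable def polyMap (p : ι → MvPolynomial σ ℂ) (x : σ → ℂ) : ι → ℂ :=
  fun i => eval x (p i)

theorem eval_polyMap (p : ι → MvPolynomial σ ℂ) (x : σ → ℂ) (f : MvPolynomial ι ℂ) :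
    eval (polyMap p x) f = eval x (aeval p f) :=
  (aeval_bind₁ x p f).symm

theorem range_polyMap_subset {p q : ι → MvPolynomial σ ℂ}
    (r : σ → MvPolynomial σ ℂ) (h : ∀ i, p i = aeval r (q i)) :
    range (polyMap p) ⊆ range (polyMap q) := by
  rintro _ ⟨x, rfl⟩
  exact ⟨polyMap r x, funext fun i => by
    show eval (polyMap r x) (q i) = eval x (p i)
    rw [h, eval_polyMap]⟩

theorem zcl_range_polyMap_lt {p q : ι → MvPolynomial σ ℂ} (r : σ → MvPolynomial σ ℂ)
    (hpq : ∀ i, p i = aeval r (q i)) (i : ι) (hp : p i = 0) (x : σ → ℂ) (hq : eval x (q i) ≠ 0) :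
    zcl (range (polyMap p)) < zcl (range (polyMap q)) :=
  zcl_lt_zcl (range_polyMap_subset r hpq) (f := X i) (by rintro _ ⟨y, rfl⟩; simp [polyMap, hp])
    (mem_range_self x) (by simpa [polyMap] using hq)

theorem isIrredV_range_polyMap (p : ι → MvPolynomial σ ℂ) : IsIrredV (range (polyMap p)) := by
  refine ⟨range_nonempty _, ?_⟩
  rintro _ _ ⟨I₁, rfl⟩ ⟨I₂, rfl⟩ hsub
  by_contra h
  rw [not_or, not_subset, not_subset] at h
  obtain ⟨⟨_, ⟨x₁, rfl⟩, hx₁⟩, ⟨_, ⟨x₂, rfl⟩, hx₂⟩⟩ := h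
  simp only [zLocus, mem_ofPred_eq, not_forall, eval_polyMap] at hx₁ hx₂
  obtain ⟨f₁, hf₁, h₁⟩ := hx₁
  obtain ⟨f₂, hf₂, h₂⟩ := hx₂
  have hne : aeval p f₁ * aeval p f₂ ≠ 0 :=
    mul_ne_zero (fun h => h₁ (by rw [h, map_zero])) (fun h => h₂ (by rw [h, map_zero]))
  obtain ⟨x, hx⟩ : ∃ x, eval x (aeval p f₁ * aeval p f₂) ≠ 0 := by
    by_contra! h
    exact hne (MvPolynomial.funext fun x => by simpa using h x)
  rw [map_mul] at hx
  rcases hsub (mem_range_self x) with h | h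
  · exact left_ne_zero_of_mul hx (by simpa [eval_polyMap] using h f₁ hf₁)
  · exact right_ne_zero_of_mul hx (by simpa [eval_polyMap] using h f₂ hf₂)

theorem adim_zcl_range_polyMap_le [Finite ι] {n : ℕ} (p : ι → MvPolynomial (Fin n) ℂ) :
    adim (zcl (range (polyMap p))) ≤ n := by
  refine (adim_le_ringKrullDim_quotient ?_).trans (ringKrullDim_quotient_ker_aeval_le p)
  rw [vanishingIdeal_zcl]
  rintro f hf _ ⟨x, rfl⟩
  exact (eval_polyMap p x f).trans (by rw [RingHom.mem_ker.1 hf, map_zero])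

theorem le_adim_zcl_range_polyMap {d : ℕ} (P : Fin (d + 1) → ι → MvPolynomial σ ℂ)
    (hP : StrictMono fun i => zcl (range (polyMap (P i)))) :
    (d : WithBot ℕ∞) ≤ adim (zcl (range (polyMap (P (Fin.last d))))) :=
  le_adim_of_strictMono _ hP (fun _ => isAlg_zcl _)
    (fun i => (isIrredV_range_polyMap (P i)).zcl) subset_rfl

end PolyMap

noncomputable def gaussChartParam : Fin 4 → MvPolynomial (Fin 2) ℂ :=
  ![X 0 * X 1, X 0, X 1, -(X 1 ^ 2)]

noncomputable def dualConeParam : Fin 5 → MvPolynomial (Fin 3) ℂ :=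
  ![X 1 * X 2, -(X 0 * X 2), X 0 * X 1, X 1 ^ 2, X 0 ^ 2]

theorem polyMap_gaussChartParam (x : Fin 2 → ℂ) :
    polyMap gaussChartParam x = ![x 0 * x 1, x 0, x 1, -(x 1 ^ 2)] := by
  ext i
  fin_cases i <;> simp [polyMap, gaussChartParam]

theorem polyMap_dualConeParam (x : Fin 3 → ℂ) :
    polyMap dualConeParam x = ![x 1 * x 2, -(x 0 * x 2), x 0 * x 1, x 1 ^ 2, x 0 ^ 2] := by
  ext i
  fin_cases i <;> simp [polyMap, dualConeParam]

theorem adim_zcl_range_gaussChartParam : adim (zcl (range (polyMap gaussChartParam))) = 2 := by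
  refine le_antisymm (adim_zcl_range_polyMap_le _) ?_
  refine le_adim_zcl_range_polyMap ![0, ![0, X 0, 0, 0], gaussChartParam]
    (Fin.strictMono_iff_lt_succ.2 fun i => ?_)
  fin_cases i
  · exact zcl_range_polyMap_lt 0 (fun i => by fin_cases i <;> simp) 1 rfl ![1, 0] (by simp)
  · exact zcl_range_polyMap_lt ![X 0, 0] (fun i => by fin_cases i <;> simp [gaussChartParam])
      2 rfl ![0, 1] (by simp [gaussChartParam])

theorem adim_zcl_range_dualConeParam : adim (zcl (range (polyMap dualConeParam))) = 3 := by
  refine le_antisymm (adim_zcl_range_polyMap_le _) ?_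
  refine le_adim_zcl_range_polyMap
    ![0, ![0, 0, 0, X 1 ^ 2, 0], ![X 1 * X 2, 0, 0, X 1 ^ 2, 0], dualConeParam]
    (Fin.strictMono_iff_lt_succ.2 fun i => ?_)
  fin_cases i
  · exact zcl_range_polyMap_lt 0 (fun i => by fin_cases i <;> simp) 3 rfl ![0, 1, 0] (by simp)
  · exact zcl_range_polyMap_lt ![0, X 1, 0] (fun i => by fin_cases i <;> simp)
      0 rfl ![0, 1, 1] (by simp)
  · exact zcl_range_polyMap_lt ![0, X 1, X 2] (fun i => by fin_cases i <;> simp [dualConeParam])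
      1 rfl ![1, 0, 1] (by simp [dualConeParam])

theorem range_gaussChart_eq :
    range (fun w : Fin 3 → ℂ =>
      (![w 0 * w 1 + 2 * (w 0) ^ 2 * (w 2), -(w 1) - 2 * (w 0) * (w 2),
        -(w 0), -((w 0) ^ 2)] : Fin 4 → ℂ)) = range (polyMap gaussChartParam) := by
  ext y
  constructor
  · rintro ⟨w, rfl⟩
    refine ⟨![-(w 1) - 2 * w 0 * w 2, -(w 0)], ?_⟩
    simp only [polyMap_gaussChartParam, Matrix.cons_val, Matrix.vecCons_inj, and_true, true_and]
    constructor <;> ring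
  · rintro ⟨x, rfl⟩
    refine ⟨![-(x 1), -(x 0), 0], ?_⟩
    rw [polyMap_gaussChartParam]
    ext i
    fin_cases i <;> simp [mul_comm]

theorem eval_perazzoCubic (v : Fin 5 → ℂ) :
    eval v perazzoCubic = v 0 * v 1 * v 2 + v 0 ^ 2 * v 4 + v 1 ^ 2 * v 3 := by
  simp [perazzoCubic]

theorem gradP_perazzoCubic (v : Fin 5 → ℂ) :
    gradP perazzoCubic v = ![v 1 * v 2 + 2 * v 0 * v 4, v 0 * v 2 + 2 * v 1 * v 3,
      v 0 * v 1, v 1 ^ 2, v 0 ^ 2] := by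
  ext i
  fin_cases i <;> simp [gradP, perazzoCubic, pderiv_X] <;> ring

theorem exists_eq_mul_of_mul_add_mul_eq_zero {K : Type*} [Field K] {a b c d : K}
    (h : a * c + b * d = 0) (hab : a = 0 → b = 0 → c = 0 ∧ d = 0) :
    ∃ t, c = b * t ∧ d = -(a * t) := by
  by_cases hb : b = 0
  · by_cases ha : a = 0
    · obtain ⟨rfl, rfl⟩ := hab ha hb
      exact ⟨0, by simp⟩
    · subst hb
      have hc : c = 0 := (mul_eq_zero.1 (by simpa using h)).resolve_left ha
      exact ⟨-d / a, by simp [hc], by field_simp⟩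
  · exact ⟨c / b, by field_simp, by field_simp; linear_combination h⟩

theorem gradP_perazzoCubic_image :
    gradP perazzoCubic '' {v | eval v perazzoCubic = 0} = range (polyMap dualConeParam) := by
  ext y
  constructor
  · rintro ⟨v, hv, rfl⟩
    rw [mem_ofPred_eq, eval_perazzoCubic] at hv
    obtain ⟨t, h₀, h₁⟩ := exists_eq_mul_of_mul_add_mul_eq_zero (a := v 0) (b := v 1)
      (c := v 1 * v 2 + 2 * v 0 * v 4) (d := v 0 * v 2 + 2 * v 1 * v 3)
      (by linear_combination 2 * hv) fun h₀ h₁ => by simp [h₀, h₁]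
    refine ⟨![v 0, v 1, t], ?_⟩
    rw [polyMap_dualConeParam, gradP_perazzoCubic, h₀, h₁]
    ext i
    fin_cases i <;> simp
  · rintro ⟨x, rfl⟩
    rw [polyMap_dualConeParam]
    by_cases hx : x 0 = 0
    · refine ⟨![0, x 1, x 2, 0, 0], by simp [eval_perazzoCubic], ?_⟩
      rw [gradP_perazzoCubic]
      ext i
      fin_cases i <;> simp [hx]
    · refine ⟨![x 0, x 1, -(x 2), 0, x 1 * x 2 / x 0], ?_, ?_⟩
      · rw [mem_ofPred_eq, eval_perazzoCubic]
        simp only [Matrix.cons_val]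
        field_simp
        ring
      · simp only [gradP_perazzoCubic, Matrix.cons_val, Matrix.vecCons_inj, and_true]
        constructor
        · field_simp
          ring
        · ring

/-- on the chart `x₀ = 1` the Gauss map of the Perazzo cubic is
`(x₁,x₂,x₃) ↦ (x₁x₂ + 2x₁²x₃, −x₂ − 2x₁x₃, −x₁, −x₁²)`, whose image is
2-dimensional; correspondingly the cone over the dual variety has (affine)
dimension 3, i.e. the dual defect equals `4 − 1 − 2 = 1`. -/
theorem stmt5 :
    adim (zcl (Set.range (fun w : Fin 3 → ℂ =>
        (![w 0 * w 1 + 2 * (w 0) ^ 2 * (w 2), -(w 1) - 2 * (w 0) * (w 2),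
            -(w 0), -((w 0) ^ 2)] : Fin 4 → ℂ)))) = 2 ∧
    adim (zcl (gradP perazzoCubic ''
        {v : Fin 5 → ℂ | MvPolynomial.eval v perazzoCubic = 0})) = 3 := by
  rw [range_gaussChart_eq, gradP_perazzoCubic_image]
  exact ⟨adim_zcl_range_gaussChartParam, adim_zcl_range_dualConeParam⟩
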